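/- arXiv:2303.06227 — 2 statements merged into one kernel-verified Lean document; each statement's English description precedes it below -/
import Mathlib

section
/- (Corollary 1, almost-sure consistency of the doubly-robust AOTT estimator with correctly specified nuisance functions.) Let (Y₀ᵢ, Y₁ᵢ, Gᵢ, Xᵢ)_{i≥1} be an i.i.d. sequence with the same distribution as (Y₀, Y₁, G, X), set ΔYᵢ := Y₁ᵢ − Y₀ᵢ, and let Δμ_N, Δμ_C be bounded versions of E[ΔY ∣ G=N, X] and E[ΔY ∣ G=C, X]. Define φ_τ(y₀, y₁, g, x) := (1{g=T}/p_T)·(y₁ − y₀ − Δμ_C(x)) + (e_T(x)/p_T)·(1{g=N}/e_N(x))·(y₁ − y₀ − Δμ_N(x)) + (1{g=T}/p_T)·Δμ_N(x) − (e_T(x)/p_T)·(1{g=C}/e_C(x))·(y₁ − y₀ − Δμ_C(x)) − (1{g=T}/p_T)·Δμ_C(x). Under consistency of the potential outcomes and Assumptions (A4), (A5) and (A6), (1/n)·Σ_{i=1}^{n} φ_τ(Y₀ᵢ, Y₁ᵢ, Gᵢ, Xᵢ) converges almost surely, as n → ∞, to the AOTT τ := E[(Y₁^{(1,1)} − Y₁^{(0,0)})·1{G=T}]/p_T.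 -/
/-!
Write `φτ = p_T⁻¹ (1{T}(Y₁^{(1,1)} - Y₁^{(0,0)}) + a_T + a_N - a_C)` where each `a_g` has the form
`h(X)(Z - f(X))1{G=g}` with `f(X)` a version of `E[Z ∣ G=g, X]`, so that `E[a_g ∣ X] = 0`.
For `g = N, C` this is `Z = ΔY`, `f = Δμ_g`. For `g = T` it is `Z = ΔY - (Y₁^{(1,1)} - Y₁^{(0,0)})`,
whose `T`-regression is, by consistency, `f_T + g_T`; assumptions (A4)–(A6), together with
`Δμ_N = f_N + g_N` and `Δμ_C = g_C`, identify it as `2Δμ_C - Δμ_N`. Hence `E[φτ] = τ`, and since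
`φτ` is integrable (the weights `e_T / e_g` are bounded by `1/ε`), the strong law of large
numbers applied to `φτ(V i)` gives the almost sure limit.
-/

open MeasureTheory ProbabilityTheory Filter Topology

/-- Group label: `T` = treated (`g(A)=(1,0)`), `N` = neighboring control (`g(A)=(0,1)`),
`C` = non-neighboring control (`g(A)=(0,0)`). -/
inductive GLabel : Type
  | T | N | C
  deriving DecidableEq

instance : MeasurableSpace GLabel := ⊤

/-- The σ-algebra `𝔛` generated by the covariates `X`. -/
def sigmaX {Ω : Type} {q : ℕ} (X : Ω → (Fin q → ℝ)) : MeasurableSpace Ω :=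
  MeasurableSpace.comap X inferInstance

/-- The indicator `1{G = g}` as a real-valued function. -/
def indG {Ω : Type} (G : Ω → GLabel) (g : GLabel) (ω : Ω) : ℝ :=
  if G ω = g then 1 else 0

/-- `f` is a version of the conditional expectation `E[Z ∣ G = g, X]`:
it is measurable and `E[Z·1{G=g} ∣ 𝔛] = f(X)·e_g(X)` `P`-a.s. -/
def IsCondVersion {Ω : Type} [MeasurableSpace Ω] (P : Measure Ω) {q : ℕ}
    (X : Ω → (Fin q → ℝ)) (G : Ω → GLabel) (e : GLabel → (Fin q → ℝ) → ℝ)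
    (g : GLabel) (Z : Ω → ℝ) (f : (Fin q → ℝ) → ℝ) : Prop :=
  Measurable f ∧
    P[(fun ω => Z ω * indG G g ω) | sigmaX X] =ᵐ[P] (fun ω => f (X ω) * e g (X ω))

theorem abs_div_le_inv_of_le {a b ε : ℝ} (ha : 0 ≤ a) (ha1 : a ≤ 1) (hε : 0 < ε) (hb : ε ≤ b) :
    |a / b| ≤ ε⁻¹ := by
  rw [abs_of_nonneg (div_nonneg ha (hε.le.trans hb)), ← one_div]
  exact div_le_div₀ zero_le_one ha1 hε hb

theorem abs_indG_le {Ω : Type} (G : Ω → GLabel) (g : GLabel) (ω : Ω) : |indG G g ω| ≤ 1 := by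
  unfold indG; split_ifs <;> norm_num

section Indicator

variable {Ω : Type} [MeasurableSpace Ω] {G : Ω → GLabel}

@[fun_prop]
theorem measurable_indG (hG : Measurable G) (g : GLabel) :
    Measurable fun ω => if G ω = g then (1 : ℝ) else 0 :=
  (measurable_from_top (f := fun x : GLabel => if x = g then (1 : ℝ) else 0)).comp hG

theorem MeasureTheory.Integrable.mul_indG {P : Measure Ω} {Z : Ω → ℝ} (hZ : Integrable Z P)
    (hG : Measurable G) (g : GLabel) : Integrable (fun ω => Z ω * indG G g ω) P :=
  hZ.mul_bdd (measurable_indG hG g).aestronglyMeasurable (ae_of_all _ (abs_indG_le G g))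

end Indicator

namespace IsCondVersion

variable {Ω : Type} [MeasurableSpace Ω] {P : Measure Ω} {q : ℕ}
  {X : Ω → (Fin q → ℝ)} {G : Ω → GLabel} {e : GLabel → (Fin q → ℝ) → ℝ} {g : GLabel}
  {Z Z' : Ω → ℝ} {f f' : (Fin q → ℝ) → ℝ}

theorem congr (hZ : ∀ᵐ ω ∂P, G ω = g → Z ω = Z' ω) (hv : IsCondVersion P X G e g Z f) :
    IsCondVersion P X G e g Z' f := by
  refine ⟨hv.1, (condExp_congr_ae ?_).symm.trans hv.2⟩
  filter_upwards [hZ] with ω hω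
  by_cases hg : G ω = g
  · rw [hω hg]
  · simp [indG, hg]

theorem add (hG : Measurable G) (hv : IsCondVersion P X G e g Z f)
    (hv' : IsCondVersion P X G e g Z' f') (hZ : Integrable Z P) (hZ' : Integrable Z' P) :
    IsCondVersion P X G e g (fun ω => Z ω + Z' ω) (fun x => f x + f' x) := by
  refine ⟨hv.1.add hv'.1, ?_⟩
  have hsum : (fun ω => (Z ω + Z' ω) * indG G g ω)
      = (fun ω => Z ω * indG G g ω) + fun ω => Z' ω * indG G g ω := by
    ext ω; simp only [Pi.add_apply, add_mul]
  filter_upwards [hsum ▸ condExp_add (hZ.mul_indG hG g) (hZ'.mul_indG hG g) (sigmaX X),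
    hv.2, hv'.2] with ω h h₁ h₂
  rw [h, Pi.add_apply, h₁, h₂, add_mul]

theorem sub (hG : Measurable G) (hv : IsCondVersion P X G e g Z f)
    (hv' : IsCondVersion P X G e g Z' f') (hZ : Integrable Z P) (hZ' : Integrable Z' P) :
    IsCondVersion P X G e g (fun ω => Z ω - Z' ω) (fun x => f x - f' x) := by
  refine ⟨hv.1.sub hv'.1, ?_⟩
  have hdiff : (fun ω => (Z ω - Z' ω) * indG G g ω)
      = (fun ω => Z ω * indG G g ω) - fun ω => Z' ω * indG G g ω := by
    ext ω; simp only [Pi.sub_apply, sub_mul]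
  filter_upwards [hdiff ▸ condExp_sub (hZ.mul_indG hG g) (hZ'.mul_indG hG g) (sigmaX X),
    hv.2, hv'.2] with ω h h₁ h₂
  rw [h, Pi.sub_apply, h₁, h₂, sub_mul]

theorem mul_left [IsFiniteMeasure P] (hX : Measurable X) (hG : Measurable G)
    (hZ : Integrable Z P) {h : (Fin q → ℝ) → ℝ} (hh : Measurable h) {c : ℝ}
    (hc : ∀ x, |h x| ≤ c) (hv : IsCondVersion P X G e g Z f) :
    IsCondVersion P X G e g (fun ω => h (X ω) * Z ω) (fun x => h x * f x) := by
  have hassoc : (fun ω => h (X ω) * Z ω * indG G g ω)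
      = (fun ω => h (X ω)) * fun ω => Z ω * indG G g ω := by
    ext ω; exact mul_assoc _ _ _
  have hpull : P[(fun ω => h (X ω)) * (fun ω => Z ω * indG G g ω) | sigmaX X]
      =ᵐ[P] (fun ω => h (X ω)) * P[fun ω => Z ω * indG G g ω | sigmaX X] :=
    condExp_stronglyMeasurable_mul_of_bound hX.comap_le
      (hh.comp (comap_measurable X)).stronglyMeasurable (hZ.mul_indG hG g) c
      (ae_of_all _ fun ω => hc (X ω))
  refine ⟨hh.mul hv.1, ?_⟩
  dsimp only
  rw [hassoc]
  filter_upwards [hpull, hv.2] with ω h₁ h₂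
  rw [h₁, Pi.mul_apply, h₂, mul_assoc]

theorem of_ae_eq (hv : IsCondVersion P X G e g Z f) (hf' : Measurable f')
    (hff' : ∀ᵐ ω ∂P, f (X ω) = f' (X ω)) : IsCondVersion P X G e g Z f' := by
  refine ⟨hf', ?_⟩
  filter_upwards [hv.2, hff'] with ω h h'
  rw [h, h']

theorem ae_eq (he : ∀ x, e g x ≠ 0) (hv : IsCondVersion P X G e g Z f)
    (hv' : IsCondVersion P X G e g Z f') : ∀ᵐ ω ∂P, f (X ω) = f' (X ω) := by
  filter_upwards [hv.2, hv'.2] with ω h h'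
  exact mul_right_cancel₀ (he (X ω)) (h.symm.trans h')

theorem integral_mul_indG [IsFiniteMeasure P] (hX : Measurable X)
    (hv : IsCondVersion P X G e g Z f) :
    ∫ ω, Z ω * indG G g ω ∂P = ∫ ω, f (X ω) * e g (X ω) ∂P :=
  (integral_condExp hX.comap_le).symm.trans (integral_congr_ae hv.2)

end IsCondVersion

section Augmentation

variable {Ω : Type} [MeasurableSpace Ω] {P : Measure Ω} [IsFiniteMeasure P] {q : ℕ}
  {X : Ω → (Fin q → ℝ)} {G : Ω → GLabel} {e : GLabel → (Fin q → ℝ) → ℝ} {g : GLabel}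
  {Z : Ω → ℝ} {f h : (Fin q → ℝ) → ℝ} {c c' : ℝ}

theorem isCondVersion_comp (hX : Measurable X) (hG : Measurable G)
    (hprop : P[(fun ω => indG G g ω) | sigmaX X] =ᵐ[P] (fun ω => e g (X ω)))
    (hf : Measurable f) (hc : ∀ x, |f x| ≤ c) :
    IsCondVersion P X G e g (fun ω => f (X ω)) f := by
  have hone : IsCondVersion P X G e g (fun _ => 1) (fun _ => 1) :=
    ⟨measurable_const, by simpa only [one_mul] using hprop⟩
  simpa only [mul_one] using hone.mul_left hX hG (integrable_const 1) hf hc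

theorem integrable_comp_of_abs_le (hX : Measurable X) (hf : Measurable f) (hc : ∀ x, |f x| ≤ c) :
    Integrable (fun ω => f (X ω)) P :=
  .of_bound (hf.comp hX).aestronglyMeasurable c (ae_of_all _ fun ω => hc (X ω))

theorem integrable_add_augmentation_and_integral_eq (hX : Measurable X) (hG : Measurable G)
    (hprop : P[(fun ω => indG G g ω) | sigmaX X] =ᵐ[P] (fun ω => e g (X ω)))
    (hv : IsCondVersion P X G e g Z f) (hZ : Integrable Z P) (hc : ∀ x, |f x| ≤ c)
    (hh : Measurable h) (hc' : ∀ x, |h x| ≤ c') {F : Ω → ℝ} (hF : Integrable F P) :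
    Integrable (fun ω => F ω + h (X ω) * (Z ω - f (X ω)) * indG G g ω) P ∧
      ∫ ω, F ω + h (X ω) * (Z ω - f (X ω)) * indG G g ω ∂P = ∫ ω, F ω ∂P := by
  have hfX := integrable_comp_of_abs_le (P := P) hX hv.1 hc
  have haug : Integrable (fun ω => h (X ω) * (Z ω - f (X ω)) * indG G g ω) P :=
    ((hZ.sub hfX).bdd_mul (hh.comp hX).aestronglyMeasurable
      (ae_of_all _ fun ω => hc' (X ω))).mul_indG hG g
  have hres := (hv.sub hG (isCondVersion_comp hX hG hprop hv.1 hc) hZ hfX).mul_left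
    hX hG (hZ.sub hfX) hh hc'
  have hcentred : ∫ ω, h (X ω) * (Z ω - f (X ω)) * indG G g ω ∂P = 0 := by
    simpa only [Pi.sub_apply, sub_self, mul_zero, zero_mul, integral_zero]
      using hres.integral_mul_indG hX
  exact ⟨hF.add haug, by rw [integral_add hF haug, hcentred, add_zero]⟩

end Augmentation

theorem strong_law_ae_comp {Ω α : Type*} [MeasurableSpace Ω] [MeasurableSpace α]
    {P : Measure Ω} {V : ℕ → Ω → α} {D : Ω → α} {φ : α → ℝ} (hφ : Measurable φ)
    (hV : iIndepFun V P) (hVD : ∀ i, IdentDistrib (V i) D P P)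
    (hint : Integrable (fun ω => φ (D ω)) P) :
    ∀ᵐ ω ∂P, Tendsto (fun n : ℕ => (n : ℝ)⁻¹ * ∑ i ∈ Finset.range n, φ (V i ω))
      atTop (𝓝 (∫ ω, φ (D ω) ∂P)) := by
  have hφV : ∀ i, IdentDistrib (fun ω => φ (V i ω)) (fun ω => φ (D ω)) P P :=
    fun i => (hVD i).comp hφ
  have hlaw := strong_law_ae (fun i ω => φ (V i ω)) ((hφV 0).integrable_iff.mpr hint)
    (fun i j hij => (hV.indepFun hij).comp hφ hφ) fun i => (hφV i).trans (hφV 0).symm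
  rw [(hφV 0).integral_eq] at hlaw
  simpa only [smul_eq_mul] using hlaw

theorem isCondVersion_treated_change_sub_effect
    {Ω : Type} [MeasurableSpace Ω] {P : Measure Ω} {q : ℕ} {X : Ω → (Fin q → ℝ)}
    {G : Ω → GLabel} (hG : Measurable G) {e : GLabel → (Fin q → ℝ) → ℝ}
    (he : ∀ g x, e g x ≠ 0) {Y0 Y1 Y110 Y111 Y101 Y100 Y000 : Ω → ℝ}
    (hI10 : Integrable Y110 P) (hI11 : Integrable Y111 P)
    (hI01 : Integrable Y101 P) (hI00 : Integrable Y100 P) (hI000 : Integrable Y000 P)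
    (hconsT : ∀ᵐ ω ∂P, G ω = GLabel.T → Y1 ω = Y110 ω)
    (hconsN : ∀ᵐ ω ∂P, G ω = GLabel.N → Y1 ω = Y101 ω)
    (hconsC : ∀ᵐ ω ∂P, G ω = GLabel.C → Y1 ω = Y100 ω)
    (hcons0 : Y0 =ᵐ[P] Y000) {gT gN gC fT fN ΔμN ΔμC : (Fin q → ℝ) → ℝ}
    (hgT : IsCondVersion P X G e GLabel.T (fun ω => Y100 ω - Y000 ω) gT)
    (hgN : IsCondVersion P X G e GLabel.N (fun ω => Y100 ω - Y000 ω) gN)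
    (hgC : IsCondVersion P X G e GLabel.C (fun ω => Y100 ω - Y000 ω) gC)
    (hfT : IsCondVersion P X G e GLabel.T (fun ω => Y110 ω - Y111 ω) fT)
    (hfN : IsCondVersion P X G e GLabel.N (fun ω => Y101 ω - Y100 ω) fN)
    (hA4 : ∀ᵐ ω ∂P, gT (X ω) = gC (X ω)) (hA5 : ∀ᵐ ω ∂P, fT (X ω) + fN (X ω) = 0)
    (hA6 : ∀ᵐ ω ∂P, gN (X ω) = gC (X ω))
    (hΔμN : IsCondVersion P X G e GLabel.N (fun ω => Y1 ω - Y0 ω) ΔμN)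
    (hΔμC : IsCondVersion P X G e GLabel.C (fun ω => Y1 ω - Y0 ω) ΔμC) :
    IsCondVersion P X G e GLabel.T (fun ω => Y1 ω - Y0 ω - (Y111 ω - Y100 ω))
      (fun x => 2 * ΔμC x - ΔμN x) := by
  have hN : ∀ᵐ ω ∂P, ΔμN (X ω) = fN (X ω) + gN (X ω) := by
    refine hΔμN.ae_eq (he _) ((hfN.add hG hgN (hI01.sub hI00) (hI00.sub hI000)).congr ?_)
    filter_upwards [hconsN, hcons0] with ω h₁ h₀ hg
    rw [h₁ hg, h₀]; ring
  have hC : ∀ᵐ ω ∂P, ΔμC (X ω) = gC (X ω) := by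
    refine hΔμC.ae_eq (he _) (hgC.congr ?_)
    filter_upwards [hconsC, hcons0] with ω h₁ h₀ hg
    rw [h₁ hg, h₀]
  refine ((hfT.add hG hgT (hI10.sub hI11) (hI00.sub hI000)).congr ?_).of_ae_eq
    ((hΔμC.1.const_mul 2).sub hΔμN.1) ?_
  · filter_upwards [hconsT, hcons0] with ω h₁ h₀ hg
    rw [h₁ hg, h₀]; ring
  · filter_upwards [hN, hC, hA4, hA5, hA6] with ω h₁ h₂ h₃ h₄ h₅
    linarith

theorem stmt_15_general
    {Ω : Type} [MeasurableSpace Ω] (P : Measure Ω) [IsProbabilityMeasure P]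
    {q : ℕ} (X : Ω → (Fin q → ℝ)) (hX : Measurable X)
    (G : Ω → GLabel) (hG : Measurable G)
    (Y0 Y1 : Ω → ℝ) (hY0 : Integrable Y0 P) (hY1 : Integrable Y1 P)
    (e : GLabel → (Fin q → ℝ) → ℝ) (he : ∀ g, Measurable (e g))
    (he1 : ∀ g x, e g x ≤ 1)
    (hprop : ∀ g : GLabel,
      P[(fun ω => indG G g ω) | sigmaX X] =ᵐ[P] (fun ω => e g (X ω)))
    (ε : ℝ) (hε : 0 < ε) (hpos : ∀ g x, ε ≤ e g x)
    (Y110 Y111 Y101 Y100 Y000 : Ω → ℝ)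
    (hI10 : Integrable Y110 P) (hI11 : Integrable Y111 P)
    (hI01 : Integrable Y101 P) (hI00 : Integrable Y100 P) (hI000 : Integrable Y000 P)
    (hconsT : ∀ᵐ ω ∂P, G ω = GLabel.T → Y1 ω = Y110 ω)
    (hconsN : ∀ᵐ ω ∂P, G ω = GLabel.N → Y1 ω = Y101 ω)
    (hconsC : ∀ᵐ ω ∂P, G ω = GLabel.C → Y1 ω = Y100 ω)
    (hcons0 : Y0 =ᵐ[P] Y000)
    (gN gC : (Fin q → ℝ) → ℝ)
    (hgN : IsCondVersion P X G e GLabel.N (fun ω => Y100 ω - Y000 ω) gN)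
    (hgC : IsCondVersion P X G e GLabel.C (fun ω => Y100 ω - Y000 ω) gC)
    (hA6 : ∀ᵐ ω ∂P, gN (X ω) = gC (X ω))
    (gT : (Fin q → ℝ) → ℝ)
    (hgT : IsCondVersion P X G e GLabel.T (fun ω => Y100 ω - Y000 ω) gT)
    (hA4 : ∀ᵐ ω ∂P, gT (X ω) = gC (X ω))
    (fT fN : (Fin q → ℝ) → ℝ)
    (hfT : IsCondVersion P X G e GLabel.T (fun ω => Y110 ω - Y111 ω) fT)
    (hfN : IsCondVersion P X G e GLabel.N (fun ω => Y101 ω - Y100 ω) fN)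
    (hA5 : ∀ᵐ ω ∂P, fT (X ω) + fN (X ω) = 0)
    (ΔμN ΔμC : (Fin q → ℝ) → ℝ)
    (hΔμN : IsCondVersion P X G e GLabel.N (fun ω => Y1 ω - Y0 ω) ΔμN)
    (hΔμC : IsCondVersion P X G e GLabel.C (fun ω => Y1 ω - Y0 ω) ΔμC)
    (MN : ℝ) (hMN : ∀ x, |ΔμN x| ≤ MN) (MC : ℝ) (hMC : ∀ x, |ΔμC x| ≤ MC)
    (φτ : ℝ × ℝ × GLabel × (Fin q → ℝ) → ℝ)
    (hφτ : ∀ (y0 y1 : ℝ) (g : GLabel) (x : Fin q → ℝ), φτ (y0, y1, g, x) =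
      ((if g = GLabel.T then (1:ℝ) else 0) / (P {ω | G ω = GLabel.T}).toReal) * (y1 - y0 - ΔμC x)
        + (e GLabel.T x / (P {ω | G ω = GLabel.T}).toReal) *
            ((if g = GLabel.N then (1:ℝ) else 0) / e GLabel.N x) * (y1 - y0 - ΔμN x)
        + ((if g = GLabel.T then (1:ℝ) else 0) / (P {ω | G ω = GLabel.T}).toReal) * ΔμN x
        - (e GLabel.T x / (P {ω | G ω = GLabel.T}).toReal) *
            ((if g = GLabel.C then (1:ℝ) else 0) / e GLabel.C x) * (y1 - y0 - ΔμC x)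
        - ((if g = GLabel.T then (1:ℝ) else 0) / (P {ω | G ω = GLabel.T}).toReal) * ΔμC x)
    (V : ℕ → Ω → ℝ × ℝ × GLabel × (Fin q → ℝ))
    (hVindep : iIndepFun V P)
    (hVid : ∀ i, IdentDistrib (V i) (fun ω => (Y0 ω, Y1 ω, G ω, X ω)) P P)
    :
    ∀ᵐ ω ∂P, Tendsto (fun n : ℕ => (n : ℝ)⁻¹ * ∑ i ∈ Finset.range n, φτ (V i ω))
      atTop (𝓝 ((∫ ω, (Y111 ω - Y100 ω) * indG G GLabel.T ω ∂P) / (P {ω | G ω = GLabel.T}).toReal)) := by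
  set pT := (P {ω | G ω = GLabel.T}).toReal
  have he0 : ∀ g x, e g x ≠ 0 := fun g x => (hε.trans_le (hpos g x)).ne'
  have hratio : ∀ g x, |e GLabel.T x / e g x| ≤ ε⁻¹ := fun g x =>
    abs_div_le_inv_of_le (hε.le.trans (hpos _ x)) (he1 _ x) hε (hpos g x)
  have hbound : ∀ x, |2 * ΔμC x - ΔμN x| ≤ 2 * MC + MN := fun x =>
    (abs_sub _ _).trans (by rw [abs_mul, abs_two]; linarith [hMC x, hMN x])
  have hvT := isCondVersion_treated_change_sub_effect hG he0 hI10 hI11 hI01 hI00 hI000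
    hconsT hconsN hconsC hcons0 hgT hgN hgC hfT hfN hA4 hA5 hA6 hΔμN hΔμC
  obtain ⟨hint₁, hmean₁⟩ := integrable_add_augmentation_and_integral_eq hX hG (hprop _) hvT
    ((hY1.sub hY0).sub (hI11.sub hI00)) hbound (h := fun _ => 1) measurable_const
    (fun _ => abs_one.le) (F := fun ω => (Y111 ω - Y100 ω) * indG G GLabel.T ω)
    ((hI11.sub hI00).mul_indG hG _)
  obtain ⟨hint₂, hmean₂⟩ := integrable_add_augmentation_and_integral_eq hX hG (hprop _) hΔμN
    (hY1.sub hY0) hMN (h := fun x => e GLabel.T x / e GLabel.N x) ((he _).div (he _))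
    (hratio _) hint₁
  obtain ⟨hint₃, hmean₃⟩ := integrable_add_augmentation_and_integral_eq hX hG (hprop _) hΔμC
    (hY1.sub hY0) hMC (h := fun x => -(e GLabel.T x / e GLabel.C x)) ((he _).div (he _)).neg
    (fun x => (abs_neg _).trans_le (hratio _ x)) hint₂
  have hφmeas : Measurable φτ := by
    -- the right-hand side is read off `hφτ`; `p` and `(p.1, p.2.1, p.2.2.1, p.2.2.2)` agree by eta
    have hφ : φτ = fun p => _ := funext fun p => hφτ p.1 p.2.1 p.2.2.1 p.2.2.2
    rw [hφ]
    have hμN := hΔμN.1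
    have hμC := hΔμC.1
    fun_prop
  have hint : Integrable (fun ω => φτ (Y0 ω, Y1 ω, G ω, X ω)) P :=
    (hint₃.const_mul pT⁻¹).congr (ae_of_all _ fun ω => by simp only [hφτ, indG]; ring)
  have hmean : ∫ ω, φτ (Y0 ω, Y1 ω, G ω, X ω) ∂P
      = (∫ ω, (Y111 ω - Y100 ω) * indG G GLabel.T ω ∂P) / pT := by
    rw [div_eq_inv_mul, ← hmean₁, ← hmean₂, ← hmean₃, ← integral_const_mul]
    exact integral_congr_ae (ae_of_all _ fun ω => by simp only [hφτ, indG]; ring)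
  simpa only [hmean] using strong_law_ae_comp hφmeas hVindep hVid hint

theorem stmt_15
    {Ω : Type} [MeasurableSpace Ω] (P : Measure Ω) [IsProbabilityMeasure P]
    {q : ℕ} (X : Ω → (Fin q → ℝ)) (hX : Measurable X)
    (G : Ω → GLabel) (hG : Measurable G)
    (Y0 Y1 : Ω → ℝ) (hY0 : Integrable Y0 P) (hY1 : Integrable Y1 P)
    (e : GLabel → (Fin q → ℝ) → ℝ) (he : ∀ g, Measurable (e g))
    (he1 : ∀ g x, e g x ≤ 1)
    (hprop : ∀ g : GLabel,
      P[(fun ω => indG G g ω) | sigmaX X] =ᵐ[P] (fun ω => e g (X ω)))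
    (ε : ℝ) (hε : 0 < ε) (hpos : ∀ g x, ε ≤ e g x)
    (hpT : 0 < (P {ω | G ω = GLabel.T}).toReal)
    (Y110 Y111 Y101 Y100 Y000 : Ω → ℝ)
    (hI10 : Integrable Y110 P) (hI11 : Integrable Y111 P)
    (hI01 : Integrable Y101 P) (hI00 : Integrable Y100 P) (hI000 : Integrable Y000 P)
    (hconsT : ∀ᵐ ω ∂P, G ω = GLabel.T → Y1 ω = Y110 ω)
    (hconsN : ∀ᵐ ω ∂P, G ω = GLabel.N → Y1 ω = Y101 ω)
    (hconsC : ∀ᵐ ω ∂P, G ω = GLabel.C → Y1 ω = Y100 ω)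
    (hcons0 : Y0 =ᵐ[P] Y000)
    (gN gC : (Fin q → ℝ) → ℝ)
    (hgN : IsCondVersion P X G e GLabel.N (fun ω => Y100 ω - Y000 ω) gN)
    (hgC : IsCondVersion P X G e GLabel.C (fun ω => Y100 ω - Y000 ω) gC)
    (hA6 : ∀ᵐ ω ∂P, gN (X ω) = gC (X ω))
    (gT : (Fin q → ℝ) → ℝ)
    (hgT : IsCondVersion P X G e GLabel.T (fun ω => Y100 ω - Y000 ω) gT)
    (hA4 : ∀ᵐ ω ∂P, gT (X ω) = gC (X ω))
    (fT fN : (Fin q → ℝ) → ℝ)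
    (hfT : IsCondVersion P X G e GLabel.T (fun ω => Y110 ω - Y111 ω) fT)
    (hfN : IsCondVersion P X G e GLabel.N (fun ω => Y101 ω - Y100 ω) fN)
    (hA5 : ∀ᵐ ω ∂P, fT (X ω) + fN (X ω) = 0)
    (ΔμN ΔμC : (Fin q → ℝ) → ℝ)
    (hΔμN : IsCondVersion P X G e GLabel.N (fun ω => Y1 ω - Y0 ω) ΔμN)
    (hΔμC : IsCondVersion P X G e GLabel.C (fun ω => Y1 ω - Y0 ω) ΔμC)
    (MN : ℝ) (hMN : ∀ x, |ΔμN x| ≤ MN) (MC : ℝ) (hMC : ∀ x, |ΔμC x| ≤ MC)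
    (φτ : ℝ × ℝ × GLabel × (Fin q → ℝ) → ℝ)
    (hφτ : ∀ (y0 y1 : ℝ) (g : GLabel) (x : Fin q → ℝ), φτ (y0, y1, g, x) =
      ((if g = GLabel.T then (1:ℝ) else 0) / (P {ω | G ω = GLabel.T}).toReal) * (y1 - y0 - ΔμC x)
        + (e GLabel.T x / (P {ω | G ω = GLabel.T}).toReal) *
            ((if g = GLabel.N then (1:ℝ) else 0) / e GLabel.N x) * (y1 - y0 - ΔμN x)
        + ((if g = GLabel.T then (1:ℝ) else 0) / (P {ω | G ω = GLabel.T}).toReal) * ΔμN x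
        - (e GLabel.T x / (P {ω | G ω = GLabel.T}).toReal) *
            ((if g = GLabel.C then (1:ℝ) else 0) / e GLabel.C x) * (y1 - y0 - ΔμC x)
        - ((if g = GLabel.T then (1:ℝ) else 0) / (P {ω | G ω = GLabel.T}).toReal) * ΔμC x)
    (V : ℕ → Ω → ℝ × ℝ × GLabel × (Fin q → ℝ))
    (hVmeas : ∀ i, Measurable (V i))
    (hVindep : iIndepFun V P)
    (hVid : ∀ i, IdentDistrib (V i) (fun ω => (Y0 ω, Y1 ω, G ω, X ω)) P P)
    :
    ∀ᵐ ω ∂P, Tendsto (fun n : ℕ => (n : ℝ)⁻¹ * ∑ i ∈ Finset.range n, φτ (V i ω))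
      atTop (𝓝 ((∫ ω, (Y111 ω - Y100 ω) * indG G GLabel.T ω ∂P) / (P {ω | G ω = GLabel.T}).toReal)) :=
  stmt_15_general P X hX G hG Y0 Y1 hY0 hY1 e he he1 hprop ε hε hpos Y110 Y111 Y101 Y100 Y000 hI10
    hI11 hI01 hI00 hI000 hconsT hconsN hconsC hcons0 gN gC hgN hgC hA6 gT hgT hA4 fT fN hfT hfN hA5
    ΔμN ΔμC hΔμN hΔμC MN hMN MC hMC φτ hφτ V hVindep hVid
end

section
/- (Identification of δ via conditional ATN marginalized over the treated; combination of the steps in the proof of Lemma 1.) Under consistency of the potential outcomes and Assumptions (A5) and (A6), for any bounded measurable w : ℝ^q → ℝ and any version f of E[Y₁^{(0,1)} − Y₁^{(0,0)} ∣ G=N, X], one has E[ w(X) · ( 1{G=N}/e_N(X) − 1{G=C}/e_C(X) ) · ΔY ] = E[ w(X) · f(X) ]. In particular, taking w = e_T/p_T shows that δ := E[(Y₁^{(1,1)} − Y₁^{(1,0)})·1{G=T}]/p_T equals the conditional spillover effect on neighboring controls marginalized over the treated group's covariate distribution. -/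
open MeasureTheory ProbabilityTheory Filter Topology

/-!
On `{G = N}` consistency splits `ΔY` into the spillover `Y₁^{(0,1)} - Y₁^{(0,0)}` plus the
untreated trend `Y₁^{(0,0)} - Y₀^{(0,0)}`, and on `{G = C}` it is the untreated trend alone.
After weighting by `w(X) / e_g(X)`, conditioning on `X` replaces each indicator `1{G = g}` by
`e_g(X)`, so the weighted difference becomes `w(X)·f(X)` plus the difference of the trends of the
two control groups, which vanishes by (A6). For `δ`, conditioning on `X` turns
`E[(Y₁^{(1,1)} - Y₁^{(1,0)})·1{G=T}]` into `E[e_T(X)·f(X)]` by (A5).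
-/

theorem integral_mul_condExp_of_bound {Ω : Type*} {m m₀ : MeasurableSpace Ω} {μ : Measure Ω}
    [IsFiniteMeasure μ] (hm : m ≤ m₀) {h Z : Ω → ℝ} (hh : StronglyMeasurable[m] h)
    (hZ : Integrable Z μ) (c : ℝ) (hbound : ∀ᵐ ω ∂μ, ‖h ω‖ ≤ c) :
    ∫ ω, h ω * μ[Z | m] ω ∂μ = ∫ ω, h ω * Z ω ∂μ :=
  (integral_congr_ae (condExp_stronglyMeasurable_mul_of_bound hm hh hZ c hbound).symm).trans
    (integral_condExp hm)

lemma abs_div_le_div_of_abs_le {a b M ε : ℝ} (ha : |a| ≤ M) (hε : 0 < ε) (hb : ε ≤ b) :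
    |a / b| ≤ M / ε := by
  rw [abs_div, abs_of_pos (hε.trans_le hb)]
  exact div_le_div₀ ((abs_nonneg a).trans ha) ha hε hb

section CondVersion

variable {Ω : Type} [MeasurableSpace Ω] {P : Measure Ω} {q : ℕ} {X : Ω → (Fin q → ℝ)}
  {G : Ω → GLabel} {e : GLabel → (Fin q → ℝ) → ℝ} {g : GLabel} {Z : Ω → ℝ}
  {φ ψ : (Fin q → ℝ) → ℝ}

lemma measurable_indG_s19 (hG : Measurable G) (g : GLabel) : Measurable (indG G g) :=
  Measurable.ite (hG (t := {g}) trivial) measurable_const measurable_const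

lemma integrable_mul_indG (hG : Measurable G) (hZ : Integrable Z P) (g : GLabel) :
    Integrable (fun ω => Z ω * indG G g ω) P :=
  hZ.mul_bdd (c := 1) (measurable_indG_s19 hG g).aestronglyMeasurable
    (ae_of_all _ fun ω => by unfold indG; split_ifs <;> simp)

lemma integrable_div_propensity_mul (hX : Measurable X) (hG : Measurable G) (hZ : Integrable Z P)
    (he : Measurable (e g)) {ε : ℝ} (hε : 0 < ε) (hpos : ∀ x, ε ≤ e g x)
    {w : (Fin q → ℝ) → ℝ} (hw : Measurable w) {M : ℝ} (hwM : ∀ x, |w x| ≤ M) :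
    Integrable (fun ω => w (X ω) / e g (X ω) * (Z ω * indG G g ω)) P :=
  (integrable_mul_indG hG hZ g).bdd_mul ((hw.div he).comp hX).aestronglyMeasurable
    (ae_of_all _ fun ω => abs_div_le_div_of_abs_le (hwM (X ω)) hε (hpos (X ω)))

lemma IsCondVersion.ae_eq_of_ne_zero (hφ : IsCondVersion P X G e g Z φ)
    (hψ : IsCondVersion P X G e g Z ψ) (he : ∀ x, e g x ≠ 0) :
    ∀ᵐ ω ∂P, φ (X ω) = ψ (X ω) := by
  filter_upwards [hφ.2.symm.trans hψ.2] with ω hω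
  exact mul_right_cancel₀ (he (X ω)) hω

lemma IsCondVersion.integral_mul_indG_s19 [IsFiniteMeasure P] (hX : Measurable X)
    (hφ : IsCondVersion P X G e g Z φ) :
    ∫ ω, Z ω * indG G g ω ∂P = ∫ ω, φ (X ω) * e g (X ω) ∂P := by
  have hm : sigmaX X ≤ ‹MeasurableSpace Ω› := hX.comap_le
  rw [← integral_condExp hm]
  exact integral_congr_ae hφ.2

lemma IsCondVersion.integral_comp_mul [IsFiniteMeasure P] (hX : Measurable X)
    (hG : Measurable G) (hφ : IsCondVersion P X G e g Z φ) (hZ : Integrable Z P)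
    {h : (Fin q → ℝ) → ℝ} (hh : Measurable h) {c : ℝ} (hc : ∀ x, |h x| ≤ c) :
    ∫ ω, h (X ω) * (Z ω * indG G g ω) ∂P
      = ∫ ω, h (X ω) * (φ (X ω) * e g (X ω)) ∂P := by
  have hm : sigmaX X ≤ ‹MeasurableSpace Ω› := hX.comap_le
  have hhX : StronglyMeasurable[sigmaX X] fun ω => h (X ω) :=
    (hh.comp (comap_measurable X)).stronglyMeasurable
  rw [← integral_mul_condExp_of_bound hm hhX (integrable_mul_indG hG hZ g) c
    (ae_of_all _ fun ω => hc (X ω))]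
  exact integral_congr_ae (hφ.2.mono fun ω hω => congrArg (h (X ω) * ·) hω)

lemma IsCondVersion.integral_div_propensity_mul [IsFiniteMeasure P] (hX : Measurable X)
    (hG : Measurable G) (hφ : IsCondVersion P X G e g Z φ) (hZ : Integrable Z P)
    (he : Measurable (e g)) {ε : ℝ} (hε : 0 < ε) (hpos : ∀ x, ε ≤ e g x)
    {w : (Fin q → ℝ) → ℝ} (hw : Measurable w) {M : ℝ} (hwM : ∀ x, |w x| ≤ M) :
    ∫ ω, w (X ω) / e g (X ω) * (Z ω * indG G g ω) ∂P
      = ∫ ω, w (X ω) * φ (X ω) ∂P := by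
  rw [hφ.integral_comp_mul hX hG hZ (h := fun x => w x / e g x) (hw.div he)
    fun x => abs_div_le_div_of_abs_le (hwM x) hε (hpos x)]
  refine integral_congr_ae (ae_of_all _ fun ω => ?_)
  have := (hε.trans_le (hpos (X ω))).ne'
  field_simp

end CondVersion

section Identification

variable {Ω : Type} [MeasurableSpace Ω] {P : Measure Ω} [IsFiniteMeasure P] {q : ℕ}
  {X : Ω → (Fin q → ℝ)} {G : Ω → GLabel} {e : GLabel → (Fin q → ℝ) → ℝ}

theorem integral_ipw_did_eq (hX : Measurable X) (hG : Measurable G)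
    (he : ∀ g, Measurable (e g)) {ε : ℝ} (hε : 0 < ε) (hpos : ∀ g x, ε ≤ e g x)
    {Y0 Y1 Y101 Y100 Y000 : Ω → ℝ} (hI01 : Integrable Y101 P) (hI00 : Integrable Y100 P)
    (hI000 : Integrable Y000 P)
    (hconsN : ∀ᵐ ω ∂P, G ω = GLabel.N → Y1 ω = Y101 ω)
    (hconsC : ∀ᵐ ω ∂P, G ω = GLabel.C → Y1 ω = Y100 ω)
    (hcons0 : Y0 =ᵐ[P] Y000) {f gN gC : (Fin q → ℝ) → ℝ}
    (hf : IsCondVersion P X G e GLabel.N (fun ω => Y101 ω - Y100 ω) f)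
    (hgN : IsCondVersion P X G e GLabel.N (fun ω => Y100 ω - Y000 ω) gN)
    (hgC : IsCondVersion P X G e GLabel.C (fun ω => Y100 ω - Y000 ω) gC)
    (hA6 : ∀ᵐ ω ∂P, gN (X ω) = gC (X ω))
    {w : (Fin q → ℝ) → ℝ} (hw : Measurable w) {M : ℝ} (hwM : ∀ x, |w x| ≤ M) :
    ∫ ω, w (X ω) *
        (indG G GLabel.N ω / e GLabel.N (X ω) - indG G GLabel.C ω / e GLabel.C (X ω)) *
        (Y1 ω - Y0 ω) ∂P
      = ∫ ω, w (X ω) * f (X ω) ∂P := by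
  set ipw : GLabel → (Ω → ℝ) → Ω → ℝ := fun g Z ω =>
    w (X ω) / e g (X ω) * (Z ω * indG G g ω)
  set spill : Ω → ℝ := fun ω => Y101 ω - Y100 ω
  set trend : Ω → ℝ := fun ω => Y100 ω - Y000 ω
  have hspill : Integrable spill P := hI01.sub hI00
  have htrend : Integrable trend P := hI00.sub hI000
  have hint : ∀ g {Z : Ω → ℝ}, Integrable Z P → Integrable (ipw g Z) P := fun g _ hZ =>
    integrable_div_propensity_mul hX hG hZ (he g) hε (hpos g) hw hwM
  have hid : ∀ {g Z φ}, Integrable Z P → IsCondVersion P X G e g Z φ →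
      ∫ ω, ipw g Z ω ∂P = ∫ ω, w (X ω) * φ (X ω) ∂P := fun hZ hφ =>
    hφ.integral_div_propensity_mul hX hG hZ (he _) hε (hpos _) hw hwM
  have hsplit : (fun ω => w (X ω) *
        (indG G GLabel.N ω / e GLabel.N (X ω) - indG G GLabel.C ω / e GLabel.C (X ω)) *
        (Y1 ω - Y0 ω))
      =ᵐ[P] fun ω => ipw GLabel.N spill ω + ipw GLabel.N trend ω - ipw GLabel.C trend ω := by
    filter_upwards [hconsN, hconsC, hcons0] with ω hN hC h0
    rcases hg : G ω with _ | _ | _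
    · simp [ipw, indG, hg]
    · simp only [ipw, spill, trend, indG, hg, hN hg, h0, reduceCtorEq, reduceIte]
      ring
    · simp only [ipw, trend, indG, hg, hC hg, h0, reduceCtorEq, reduceIte]
      ring
  calc _ = ∫ ω, ipw GLabel.N spill ω + ipw GLabel.N trend ω - ipw GLabel.C trend ω ∂P :=
        integral_congr_ae hsplit
    _ = ∫ ω, w (X ω) * f (X ω) ∂P + ∫ ω, w (X ω) * gN (X ω) ∂P
        - ∫ ω, w (X ω) * gC (X ω) ∂P := by
      rw [integral_sub ((hint _ hspill).fun_add (hint _ htrend)) (hint _ htrend),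
        integral_add (hint _ hspill) (hint _ htrend), hid hspill hf, hid htrend hgN,
        hid htrend hgC]
    _ = ∫ ω, w (X ω) * f (X ω) ∂P := by
      rw [integral_congr_ae (hA6.mono fun ω h => congrArg (w (X ω) * ·) h)]
      ring

theorem integral_spillover_treated_eq (hX : Measurable X) {Y110 Y111 Y101 Y100 : Ω → ℝ}
    {fT fN f : (Fin q → ℝ) → ℝ}
    (hfT : IsCondVersion P X G e GLabel.T (fun ω => Y110 ω - Y111 ω) fT)
    (hfN : IsCondVersion P X G e GLabel.N (fun ω => Y101 ω - Y100 ω) fN)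
    (hA5 : ∀ᵐ ω ∂P, fT (X ω) + fN (X ω) = 0)
    (hf : IsCondVersion P X G e GLabel.N (fun ω => Y101 ω - Y100 ω) f)
    (heN : ∀ x, e GLabel.N x ≠ 0) :
    ∫ ω, (Y111 ω - Y110 ω) * indG G GLabel.T ω ∂P
      = ∫ ω, e GLabel.T (X ω) * f (X ω) ∂P :=
  calc _ = -∫ ω, (Y110 ω - Y111 ω) * indG G GLabel.T ω ∂P := by
        rw [← integral_neg]
        congr with ω
        ring
    _ = -∫ ω, fT (X ω) * e GLabel.T (X ω) ∂P := by rw [hfT.integral_mul_indG_s19 hX]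
    _ = _ := by
      rw [← integral_neg]
      refine integral_congr_ae ?_
      filter_upwards [hA5, hf.ae_eq_of_ne_zero hfN heN] with ω h5 hfω
      rw [hfω, eq_neg_of_add_eq_zero_left h5]
      ring

end Identification

theorem stmt_19_general
    {Ω : Type} [MeasurableSpace Ω] (P : Measure Ω) [IsProbabilityMeasure P]
    {q : ℕ} (X : Ω → (Fin q → ℝ)) (hX : Measurable X)
    (G : Ω → GLabel) (hG : Measurable G)
    (Y0 Y1 : Ω → ℝ)
    (e : GLabel → (Fin q → ℝ) → ℝ) (he : ∀ g, Measurable (e g))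
    (ε : ℝ) (hε : 0 < ε) (hpos : ∀ g x, ε ≤ e g x)
    (Y110 Y111 Y101 Y100 Y000 : Ω → ℝ)
    (hI01 : Integrable Y101 P) (hI00 : Integrable Y100 P) (hI000 : Integrable Y000 P)
    (hconsN : ∀ᵐ ω ∂P, G ω = GLabel.N → Y1 ω = Y101 ω)
    (hconsC : ∀ᵐ ω ∂P, G ω = GLabel.C → Y1 ω = Y100 ω)
    (hcons0 : Y0 =ᵐ[P] Y000)
    (fT fN : (Fin q → ℝ) → ℝ)
    (hfT : IsCondVersion P X G e GLabel.T (fun ω => Y110 ω - Y111 ω) fT)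
    (hfN : IsCondVersion P X G e GLabel.N (fun ω => Y101 ω - Y100 ω) fN)
    (hA5 : ∀ᵐ ω ∂P, fT (X ω) + fN (X ω) = 0)
    (gN gC : (Fin q → ℝ) → ℝ)
    (hgN : IsCondVersion P X G e GLabel.N (fun ω => Y100 ω - Y000 ω) gN)
    (hgC : IsCondVersion P X G e GLabel.C (fun ω => Y100 ω - Y000 ω) gC)
    (hA6 : ∀ᵐ ω ∂P, gN (X ω) = gC (X ω))
    (w : (Fin q → ℝ) → ℝ) (hw : Measurable w) (M : ℝ) (hwM : ∀ x, |w x| ≤ M)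
    (f : (Fin q → ℝ) → ℝ)
    (hf : IsCondVersion P X G e GLabel.N (fun ω => Y101 ω - Y100 ω) f)
    :
    (∫ ω, w (X ω) *
          (indG G GLabel.N ω / e GLabel.N (X ω) - indG G GLabel.C ω / e GLabel.C (X ω)) *
          (Y1 ω - Y0 ω) ∂P
        = ∫ ω, w (X ω) * f (X ω) ∂P) ∧
      ((∫ ω, (Y111 ω - Y110 ω) * indG G GLabel.T ω ∂P) / (P {ω | G ω = GLabel.T}).toReal
        = ∫ ω, (e GLabel.T (X ω) / (P {ω | G ω = GLabel.T}).toReal) * f (X ω) ∂P) := by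
  refine ⟨integral_ipw_did_eq hX hG he hε hpos hI01 hI00 hI000 hconsN hconsC hcons0 hf hgN hgC
    hA6 hw hwM, ?_⟩
  rw [integral_spillover_treated_eq hX hfT hfN hA5 hf fun x => (hε.trans_le (hpos _ x)).ne',
    ← integral_div]
  congr with ω
  ring

theorem stmt_19
    {Ω : Type} [MeasurableSpace Ω] (P : Measure Ω) [IsProbabilityMeasure P]
    {q : ℕ} (X : Ω → (Fin q → ℝ)) (hX : Measurable X)
    (G : Ω → GLabel) (hG : Measurable G)
    (Y0 Y1 : Ω → ℝ) (hY0 : Integrable Y0 P) (hY1 : Integrable Y1 P)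
    (e : GLabel → (Fin q → ℝ) → ℝ) (he : ∀ g, Measurable (e g))
    (he1 : ∀ g x, e g x ≤ 1)
    (hprop : ∀ g : GLabel,
      P[(fun ω => indG G g ω) | sigmaX X] =ᵐ[P] (fun ω => e g (X ω)))
    (ε : ℝ) (hε : 0 < ε) (hpos : ∀ g x, ε ≤ e g x)
    (hpT : 0 < (P {ω | G ω = GLabel.T}).toReal)
    (Y110 Y111 Y101 Y100 Y000 : Ω → ℝ)
    (hI10 : Integrable Y110 P) (hI11 : Integrable Y111 P)
    (hI01 : Integrable Y101 P) (hI00 : Integrable Y100 P) (hI000 : Integrable Y000 P)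
    (hconsT : ∀ᵐ ω ∂P, G ω = GLabel.T → Y1 ω = Y110 ω)
    (hconsN : ∀ᵐ ω ∂P, G ω = GLabel.N → Y1 ω = Y101 ω)
    (hconsC : ∀ᵐ ω ∂P, G ω = GLabel.C → Y1 ω = Y100 ω)
    (hcons0 : Y0 =ᵐ[P] Y000)
    (fT fN : (Fin q → ℝ) → ℝ)
    (hfT : IsCondVersion P X G e GLabel.T (fun ω => Y110 ω - Y111 ω) fT)
    (hfN : IsCondVersion P X G e GLabel.N (fun ω => Y101 ω - Y100 ω) fN)
    (hA5 : ∀ᵐ ω ∂P, fT (X ω) + fN (X ω) = 0)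
    (gN gC : (Fin q → ℝ) → ℝ)
    (hgN : IsCondVersion P X G e GLabel.N (fun ω => Y100 ω - Y000 ω) gN)
    (hgC : IsCondVersion P X G e GLabel.C (fun ω => Y100 ω - Y000 ω) gC)
    (hA6 : ∀ᵐ ω ∂P, gN (X ω) = gC (X ω))
    (w : (Fin q → ℝ) → ℝ) (hw : Measurable w) (M : ℝ) (hwM : ∀ x, |w x| ≤ M)
    (f : (Fin q → ℝ) → ℝ)
    (hf : IsCondVersion P X G e GLabel.N (fun ω => Y101 ω - Y100 ω) f)
    :
    (∫ ω, w (X ω) *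
          (indG G GLabel.N ω / e GLabel.N (X ω) - indG G GLabel.C ω / e GLabel.C (X ω)) *
          (Y1 ω - Y0 ω) ∂P
        = ∫ ω, w (X ω) * f (X ω) ∂P) ∧
      ((∫ ω, (Y111 ω - Y110 ω) * indG G GLabel.T ω ∂P) / (P {ω | G ω = GLabel.T}).toReal
        = ∫ ω, (e GLabel.T (X ω) / (P {ω | G ω = GLabel.T}).toReal) * f (X ω) ∂P) :=
  stmt_19_general P X hX G hG Y0 Y1 e he ε hε hpos Y110 Y111 Y101 Y100 Y000 hI01 hI00 hI000 hconsN
    hconsC hcons0 fT fN hfT hfN hA5 gN gC hgN hgC hA6 w hw M hwM f hf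
end
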